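/- Let CSG_{n,k} be the community star graph on n vertices: a star graph whose weight function assigns weight 1 to k of the edges and weight w to the remaining n−k−1 edges. Let c be the center vertex, x a leaf incident to an edge of weight 1, and y a leaf incident to an edge of weight w. With q_n = n^α, w_n = n^β (α,β∈ℝ) and k constant, the following limits hold as n→∞. For U_{q_n}^{(CSG_{n,k})}(c,x): it converges to 0 if α<0; if α=0, it converges to 1/2 when β>−1, to (k+3)/(2k+8) when β=−1, and to (k+1)/(2k+4) when β<−1; and it converges to 1 if α>0. For U_{q_n}^{(CSG_{n,k})}(c,y): it converges to 0 if α<β, to 1/2 if α=β, and to 1 if α>β. -/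

import Mathlib

open Classical Finset Filter

noncomputable section

variable {V : Type*} [Fintype V] [DecidableEq V]

/-- One step of following the parent map of a rooted forest. -/
def fstep (f : V → Option V) : Option V → Option V := fun o => o.bind f

/-- `f : V → Option V` encodes a spanning rooted forest structure: every vertex either is a
root (`f x = none`) or points to its parent, and iterating the parent map from any vertex
eventually reaches a root (i.e. there are no cycles). -/
def IsForest (f : V → Option V) : Prop :=
  ∀ x : V, ∃ n : ℕ, (fstep f)^[n] (some x) = none

/-- `f` is a spanning rooted forest of the directed graph with edge relation `E`:
all its (parent-pointing) edges are edges of the graph. -/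
def IsRForest (E : V → V → Prop) (f : V → Option V) : Prop :=
  IsForest f ∧ ∀ x y : V, f x = some y → E x y

/-- The number of roots (equivalently, of trees) of a rooted forest. -/
def nRoots (f : V → Option V) : ℕ := (univ.filter fun x : V => f x = none).card

/-- The weight `w(F) = ∏_{e ∈ F} w(e)` of a rooted forest. -/
def fWeight (w : V → V → ℝ) (f : V → Option V) : ℝ :=
  ∏ x : V, (f x).elim 1 (fun y => w x y)

/-- Non-normalised forest measure of a set `H` of forests: `∑_{F ∈ H} q^{r(F)} w(F)`,
the sum running over spanning rooted forests of the graph belonging to `H`. -/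
def fMeasure (E : V → V → Prop) (w : V → V → ℝ) (q : ℝ) (H : Set (V → Option V)) : ℝ :=
  ∑ f ∈ univ.filter (fun f : V → Option V => IsRForest E f ∧ f ∈ H),
    q ^ nRoots f * fWeight w f

/-- Partition function `Z(q) = ∑_F q^{r(F)} w(F)`. -/
def Zf (E : V → V → Prop) (w : V → V → ℝ) (q : ℝ) : ℝ := fMeasure E w q Set.univ

/-- Probability `P(Φ_q ∈ H)` for the random spanning rooted forest `Φ_q`. -/
def fProb (E : V → V → Prop) (w : V → V → ℝ) (q : ℝ) (H : Set (V → Option V)) : ℝ :=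
  fMeasure E w q H / Zf E w q

/-- Ancestor relation in the forest `f`. -/
def anc (f : V → Option V) : V → V → Prop :=
  Relation.ReflTransGen (fun a b => f a = some b)

/-- `x` and `y` belong to the same tree of the forest `f` (they have a common ancestor). -/
def SameTree (f : V → Option V) (x y : V) : Prop := ∃ z, anc f x z ∧ anc f y z

/-- Two-point correlation `U_q(x,y)`: the probability that `x` and `y` lie in
different trees of `Φ_q`. -/
def Ucorr (E : V → V → Prop) (w : V → V → ℝ) (q : ℝ) (x y : V) : ℝ :=
  fProb E w q {f | ¬ SameTree f x y}

end

noncomputable section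

/-- The star graph on `n` vertices (realised on `Fin n`): the centre is the vertex with
label `0`, adjacent to the `n-1` leaves. -/
def starAdj (n : ℕ) : Fin n → Fin n → Prop := fun i j =>
  i ≠ j ∧ ((i : ℕ) = 0 ∨ (j : ℕ) = 0)

/-- The weight function of the community star graph `CSG_{n,k}`: the `k` edges between the
centre (label `0`) and the leaves with labels `1,…,k` have weight `1`, the remaining
`n-k-1` edges have weight `wv`. -/
def cstarW (n k : ℕ) (wv : ℝ) : Fin n → Fin n → ℝ := fun i j =>
  if max (i : ℕ) (j : ℕ) ≤ k then 1 else wv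

/-- Two-point correlation on the community star graph `CSG_{n,k}`, with vertices given by
their labels in `{0,…,n-1}` (junk value `0` for out-of-range labels). -/
def UCStar (n k : ℕ) (wv q : ℝ) (i j : ℕ) : ℝ :=
  if h : i < n ∧ j < n then
    Ucorr (starAdj n) (cstarW n k wv) q ⟨i, h.1⟩ ⟨j, h.2⟩
  else 0

/-!
A rooted spanning forest of the star with centre `0` is determined by the set `S` of leaves
pointing to the centre and by the parent `c` of the centre, which is absent or a leaf outside `S`.
The weight `q ^ r(F) * w(F)` factorises over the leaves, so summing over `S` gives, for the forests
in which the tree of the centre meets no leaf outside `A`, the closed form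
`q ^ #(leaves \ A) * q * (∏ i ∈ A, (w i 0 + q)) * (1 + ∑ j ∈ A, w 0 j / (w j 0 + q))`.
Dividing the case `A = leaves \ {v}` by the case `A = leaves` yields
`U_q(0, v) = q / (w v 0 + q) * (1 - r v / (1 + R))` with `r j = w 0 j / (w j 0 + q)` and
`R = ∑ j, r j`; on `CSG_{n,k}` this is `(1 - r v) * (1 - r v / (1 + R))` with
`R = k / (1 + q) + (n - 1 - k) * w / (w + q)`.

When `r v` tends to `1` or `0` (by the sign of `α`, resp. of `α - β`), the bounds
`(1 - r v) ^ 2 ≤ U ≤ 1 - r v` give the limits `0` and `1` whatever `R ≥ 0` does. In the balanced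
cases `r v = 1 / 2` and the limit is decided by `R`, which tends to `∞` unless `α = 0` and
`β ≤ -1`; then `(n - 1 - k) * w / (w + 1)` tends to `1` for `β = -1` and to `0` for `β < -1`.
-/

section Forest

variable {V : Type*}

theorem isForest_of_rank (f : V → Option V) (rank : V → ℕ)
    (hrank : ∀ x y, f x = some y → rank y < rank x) : IsForest f := by
  suffices h : ∀ m x, rank x < m → (fstep f)^[m] (some x) = none from
    fun x => ⟨_, h _ x (Nat.lt_succ_self _)⟩
  intro m
  induction m with
  | zero => exact fun x hx => absurd hx (Nat.not_lt_zero _)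
  | succ m ih =>
    intro x hx
    change (fstep f)^[m] (f x) = none
    cases hfx : f x with
    | none => exact Function.iterate_fixed (f := fstep f) rfl m
    | some y => exact ih y (by have := hrank x y hfx; omega)

theorem IsForest.ne_of_eq_some {f : V → Option V} (hf : IsForest f) {x y : V}
    (hxy : f x = some y) : f y ≠ some x := by
  intro hyx
  have hcycle : ∀ m, (fstep f)^[m] (some x) = some x ∨ (fstep f)^[m] (some x) = some y := by
    intro m
    induction m with
    | zero => exact Or.inl rfl
    | succ m ih =>
      rw [Function.iterate_succ_apply']
      rcases ih with h | h <;> rw [h]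
      exacts [Or.inr hxy, Or.inl hyx]
  obtain ⟨m, hm⟩ := hf x
  rcases hcycle m with h | h <;> simp [hm] at h

theorem pow_nRoots_mul_fWeight [Fintype V] (w : V → V → ℝ) (q : ℝ) (f : V → Option V) :
    q ^ nRoots f * fWeight w f = ∏ x, (f x).elim q (w x) := by
  rw [nRoots, ← prod_const, prod_filter, fWeight, ← prod_mul_distrib]
  refine prod_congr rfl fun x _ => ?_
  cases f x <;> simp

theorem anc_eq_of_eq_none {f : V → Option V} {x z : V} (hx : f x = none) (h : anc f x z) :
    z = x := by
  rcases Relation.ReflTransGen.cases_head h with h | ⟨y, hxy, -⟩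
  · exact h.symm
  · simp [hx] at hxy

end Forest

section StarPolynomial

variable {ι R : Type*} [DecidableEq ι]

theorem sum_powerset_prod_ite [CommSemiring R] (A : Finset ι) (a : ι → R) (q : R) :
    ∑ S ∈ A.powerset, ∏ i ∈ A, (if i ∈ S then a i else q) = ∏ i ∈ A, (a i + q) := by
  rw [prod_add]
  refine sum_congr rfl fun S hS => ?_
  rw [prod_ite, filter_mem_eq_inter, inter_eq_right.2 (mem_powerset.1 hS),
    filter_notMem_eq_sdiff]

theorem sum_powerset_sum_insertNone [CommSemiring R] (A : Finset ι) (a b : ι → R) (q : R) :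
    ∑ S ∈ A.powerset, ∑ c ∈ insertNone (A \ S),
        c.elim q b * ∏ i ∈ A, (if i ∈ S then a i else q)
      = q * (∏ i ∈ A, (a i + q) + ∑ j ∈ A, b j * ∏ i ∈ A.erase j, (a i + q)) := by
  simp only [sum_insertNone, Option.elim_none, Option.elim_some, sum_add_distrib, ← mul_sum,
    sum_powerset_prod_ite, mul_add]
  congr 1
  rw [sum_comm' (t' := A) (s' := fun j => (A.erase j).powerset)
    (fun S j => by rw [mem_powerset, Finset.mem_sdiff, mem_powerset, subset_erase]; tauto), mul_sum]
  refine sum_congr rfl fun j hj => ?_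
  have hsplit : ∀ S ∈ (A.erase j).powerset,
      b j * ∏ i ∈ A, (if i ∈ S then a i else q)
        = q * (b j * ∏ i ∈ A.erase j, (if i ∈ S then a i else q)) := fun S hS => by
    have hjS : j ∉ S := fun h => (mem_powerset.1 hS h |> ne_of_mem_erase) rfl
    rw [← mul_prod_erase A _ hj, if_neg hjS]
    ring
  rw [sum_congr rfl hsplit, ← mul_sum, ← mul_sum, sum_powerset_prod_ite]

theorem prod_add_sum_mul_prod_erase [Field R] {A : Finset ι} {a : ι → R} (b : ι → R) {q : R}
    (h : ∀ i ∈ A, a i + q ≠ 0) :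
    ∏ i ∈ A, (a i + q) + ∑ j ∈ A, b j * ∏ i ∈ A.erase j, (a i + q)
      = (∏ i ∈ A, (a i + q)) * (1 + ∑ j ∈ A, b j / (a j + q)) := by
  rw [mul_add, mul_one, mul_sum]
  refine congrArg _ (sum_congr rfl fun j hj => ?_)
  rw [← mul_prod_erase A _ hj]
  field_simp [h j hj]

end StarPolynomial

section StarForest

variable {n : ℕ} {S A : Finset (Fin n)} {c : Option (Fin n)}

def starCodes (A : Finset (Fin n)) : Finset (Σ _ : Finset (Fin n), Option (Fin n)) :=
  A.powerset.sigma fun S => insertNone (A \ S)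

theorem mem_starCodes {p : Σ _ : Finset (Fin n), Option (Fin n)} :
    p ∈ starCodes A ↔ p.1 ⊆ A ∧ ∀ j ∈ p.2, j ∈ A \ p.1 := by
  rw [starCodes, mem_sigma, mem_powerset, mem_insertNone]

variable [NeZero n]

def starForest (S : Finset (Fin n)) (c : Option (Fin n)) : Fin n → Option (Fin n) :=
  fun i => if i = 0 then c else if i ∈ S then some 0 else none

def separatedOutside (A : Finset (Fin n)) : Set (Fin n → Option (Fin n)) :=
  {f | ∀ v, v ≠ 0 → v ∉ A → ¬ SameTree f 0 v}

theorem starForest_zero : starForest S c 0 = c := if_pos rfl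

theorem starForest_of_ne_zero {i : Fin n} (hi : i ≠ 0) :
    starForest S c i = if i ∈ S then some 0 else none := if_neg hi

theorem starForest_eq_some_iff {x y : Fin n} :
    starForest S c x = some y ↔ (x = 0 ∧ c = some y) ∨ (x ≠ 0 ∧ x ∈ S ∧ y = 0) := by
  unfold starForest
  split_ifs <;> simp [*, eq_comm]

theorem isRForest_starForest (hA : 0 ∉ A) (hc : ∀ j ∈ c, j ∈ A \ S) :
    IsRForest (starAdj n) (starForest S c) := by
  have hc' : ∀ j, c = some j → j ≠ 0 ∧ j ∉ S := fun j hj => by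
    have := mem_sdiff.1 (hc j hj)
    exact ⟨fun h => hA (h ▸ this.1), this.2⟩
  refine ⟨isForest_of_rank _ (fun i => if i = 0 then 1 else if i ∈ S then 2 else 0) ?_, ?_⟩
  · intro x y hxy
    rcases starForest_eq_some_iff.1 hxy with ⟨rfl, hcy⟩ | ⟨hx, hxS, rfl⟩
    · simp [hc' y hcy]
    · simp [hx, hxS]
  · intro x y hxy
    rcases starForest_eq_some_iff.1 hxy with ⟨rfl, hcy⟩ | ⟨hx, -, rfl⟩
    · exact ⟨Ne.symm (hc' y hcy).1, Or.inl rfl⟩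
    · exact ⟨hx, Or.inr rfl⟩

theorem sameTree_starForest_iff (hA : 0 ∉ A) (hc : ∀ j ∈ c, j ∈ A \ S) {v : Fin n}
    (hv : v ≠ 0) : SameTree (starForest S c) 0 v ↔ v ∈ S ∨ c = some v := by
  constructor
  · rintro ⟨z, h0z, hvz⟩
    by_contra! ⟨hvS, hcv⟩
    have hroot : ∀ u, u ≠ 0 → u ∉ S → starForest S c u = none := fun u hu huS => by
      rw [starForest_of_ne_zero hu, if_neg huS]
    obtain rfl := anc_eq_of_eq_none (hroot v hv hvS) hvz
    rcases Relation.ReflTransGen.cases_head h0z with h | ⟨b, h0b, hbz⟩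
    · exact hv h.symm
    · rw [starForest_zero] at h0b
      obtain ⟨hbA, hbS⟩ := mem_sdiff.1 (hc b h0b)
      obtain rfl := anc_eq_of_eq_none (hroot b (fun h => hA (h ▸ hbA)) hbS) hbz
      exact hcv h0b
  · rintro (hvS | rfl)
    · exact ⟨0, .refl, .single (by rw [starForest_of_ne_zero hv, if_pos hvS])⟩
    · exact ⟨v, .single starForest_zero, .refl⟩

def starCode (f : Fin n → Option (Fin n)) : Σ _ : Finset (Fin n), Option (Fin n) :=
  ⟨univ.filter fun i => f i = some 0, f 0⟩

theorem starForest_mem_separatedOutside (hA : 0 ∉ A) (hS : S ⊆ A) (hc : ∀ j ∈ c, j ∈ A \ S) :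
    starForest S c ∈ separatedOutside A := by
  intro v hv hvA
  rw [sameTree_starForest_iff hA hc hv]
  rintro (hvS | rfl)
  exacts [hvA (hS hvS), hvA (mem_sdiff.1 (hc v rfl)).1]

theorem starCode_starForest (hA : 0 ∉ A) (hS : S ⊆ A) (hc : ∀ j ∈ c, j ∈ A \ S) :
    starCode (starForest S c) = ⟨S, c⟩ := by
  have hfilter : (univ.filter fun i => starForest S c i = some 0) = S := by
    ext i
    simp only [mem_filter, mem_univ, true_and, starForest_eq_some_iff, and_true]
    constructor
    · rintro (⟨-, hc0⟩ | ⟨-, hi⟩)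
      exacts [absurd (mem_sdiff.1 (hc 0 hc0)).1 hA, hi]
    · exact fun hi => Or.inr ⟨fun h => hA (h ▸ hS hi), hi⟩
  simp only [starCode, hfilter, starForest_zero]

theorem starForest_starCode {f : Fin n → Option (Fin n)} (hf : IsRForest (starAdj n) f) :
    starForest (starCode f).1 (starCode f).2 = f := by
  funext i
  by_cases hi : i = 0
  · rw [hi, starForest_zero]
    rfl
  · rw [starForest_of_ne_zero hi]
    cases hfi : f i with
    | none => simp [starCode, hfi]
    | some j =>
      have hj : j = 0 := Fin.ext <| (hf.2 i j hfi).2.resolve_left fun h => hi (Fin.ext h)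
      simp [starCode, hfi, hj]

theorem starCode_mem_starCodes {f : Fin n → Option (Fin n)} (hf : IsRForest (starAdj n) f)
    (hsep : f ∈ separatedOutside A) : starCode f ∈ starCodes A := by
  have hmem : ∀ j, SameTree f 0 j → j ≠ 0 → j ∈ A := fun j h0j hj0 => by
    by_contra hj
    exact hsep j hj0 hj h0j
  have hne : ∀ i j, f i = some j → i ≠ j := fun i j h => (hf.2 i j h).1
  refine mem_starCodes.2 ⟨fun i hi => ?_, fun j hj => ?_⟩
  · have hi : f i = some 0 := (mem_filter.1 hi).2
    exact hmem i ⟨0, .refl, .single hi⟩ (hne i 0 hi)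
  · have hj : f 0 = some j := hj
    refine mem_sdiff.2 ⟨hmem j ⟨j, .single hj, .refl⟩ (hne 0 j hj).symm, fun hjS => ?_⟩
    exact hf.1.ne_of_eq_some hj (mem_filter.1 hjS).2

theorem starForest_weight (w : Fin n → Fin n → ℝ) (q : ℝ) :
    q ^ nRoots (starForest S c) * fWeight w (starForest S c)
      = c.elim q (w 0) * ∏ i ∈ univ.erase 0, if i ∈ S then w i 0 else q := by
  rw [pow_nRoots_mul_fWeight, ← mul_prod_erase _ _ (mem_univ 0), starForest_zero]
  refine congrArg _ (prod_congr rfl fun i hi => ?_)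
  rw [starForest_of_ne_zero (ne_of_mem_erase hi)]
  split_ifs <;> rfl

theorem fMeasure_separatedOutside_eq_sum (w : Fin n → Fin n → ℝ) (q : ℝ) (hA : 0 ∉ A) :
    fMeasure (starAdj n) w q (separatedOutside A)
      = ∑ S ∈ A.powerset, ∑ c ∈ insertNone (A \ S),
          c.elim q (w 0) * ∏ i ∈ univ.erase 0, if i ∈ S then w i 0 else q := by
  rw [fMeasure, sum_sigma', ← starCodes]
  refine sum_nbij' starCode (fun p => starForest p.1 p.2)
    (fun f hf => starCode_mem_starCodes (mem_filter.1 hf).2.1 (mem_filter.1 hf).2.2)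
    (fun p hp => ?_) (fun f hf => starForest_starCode (mem_filter.1 hf).2.1)
    (fun p hp => starCode_starForest hA (mem_starCodes.1 hp).1 (mem_starCodes.1 hp).2)
    (fun f hf => ?_)
  · obtain ⟨hS, hc⟩ := mem_starCodes.1 hp
    exact mem_filter.2 ⟨mem_univ _, isRForest_starForest hA hc,
      starForest_mem_separatedOutside hA hS hc⟩
  · rw [← starForest_weight, starForest_starCode (mem_filter.1 hf).2.1]

theorem fMeasure_separatedOutside (w : Fin n → Fin n → ℝ) (q : ℝ) (hA : 0 ∉ A) :
    fMeasure (starAdj n) w q (separatedOutside A)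
      = q ^ #((univ.erase 0) \ A) * (q * (∏ i ∈ A, (w i 0 + q)
          + ∑ j ∈ A, w 0 j * ∏ i ∈ A.erase j, (w i 0 + q))) := by
  have hAL : A ⊆ univ.erase 0 := fun i hi => mem_erase.2 ⟨fun h => hA (h ▸ hi), mem_univ _⟩
  have hprod : ∀ S ∈ A.powerset, (∏ i ∈ univ.erase 0, if i ∈ S then w i 0 else q)
      = q ^ #((univ.erase 0) \ A) * ∏ i ∈ A, if i ∈ S then w i 0 else q := fun S hS => by
    rw [← prod_sdiff hAL, ← prod_const]
    refine congrArg (· * _) (prod_congr rfl fun i hi => if_neg fun hiS => ?_)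
    exact (mem_sdiff.1 hi).2 (mem_powerset.1 hS hiS)
  rw [fMeasure_separatedOutside_eq_sum w q hA, ← sum_powerset_sum_insertNone, mul_sum]
  refine sum_congr rfl fun S hS => ?_
  rw [mul_sum]
  refine sum_congr rfl fun c _ => ?_
  rw [hprod S hS]
  ring

theorem separatedOutside_univ_erase_zero :
    separatedOutside (univ.erase (0 : Fin n)) = Set.univ :=
  Set.eq_univ_of_forall fun _ u hu huL => absurd (mem_erase.2 ⟨hu, mem_univ u⟩) huL

theorem separatedOutside_erase {v : Fin n} (hv : v ≠ 0) :
    separatedOutside ((univ.erase 0).erase v) = {f | ¬ SameTree f 0 v} := by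
  ext f
  refine ⟨fun h => h v hv (by simp), fun h u hu huA => ?_⟩
  obtain rfl : u = v := by simpa [hu] using huA
  exact h

theorem Ucorr_starAdj_zero (w : Fin n → Fin n → ℝ) (hw : ∀ i j, 0 ≤ w i j) {q : ℝ} (hq : 0 < q)
    {v : Fin n} (hv : v ≠ 0) :
    Ucorr (starAdj n) w q 0 v = q / (w v 0 + q)
      * (1 - w 0 v / (w v 0 + q) / (1 + ∑ j ∈ univ.erase 0, w 0 j / (w j 0 + q))) := by
  have hL : (0 : Fin n) ∉ univ.erase 0 := notMem_erase 0 univ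
  have hvL : v ∈ univ.erase 0 := mem_erase.2 ⟨hv, mem_univ v⟩
  have hpos : ∀ i, 0 < w i 0 + q := fun i => by linarith [hw i 0]
  have hv0 : 0 < w v 0 + q := hpos v
  have hR : 0 ≤ ∑ j ∈ univ.erase 0, w 0 j / (w j 0 + q) :=
    sum_nonneg fun j _ => div_nonneg (hw 0 j) (hpos j).le
  have hprod : 0 < ∏ i ∈ (univ.erase 0).erase v, (w i 0 + q) := prod_pos fun i _ => hpos i
  rw [Ucorr, fProb, Zf, ← separatedOutside_erase hv, ← separatedOutside_univ_erase_zero,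
    fMeasure_separatedOutside w q (fun h => hL (mem_of_mem_erase h)),
    fMeasure_separatedOutside w q hL, sdiff_erase_self hvL, Finset.sdiff_self, card_singleton,
    card_empty, prod_add_sum_mul_prod_erase _ fun i _ => (hpos i).ne',
    prod_add_sum_mul_prod_erase _ fun i _ => (hpos i).ne', sum_erase_eq_sub hvL,
    ← mul_prod_erase _ _ hvL]
  field_simp
  ring

end StarForest

def leafRatio (w q : ℝ) : ℝ := w / (w + q)

def starCorr (r R : ℝ) : ℝ := (1 - r) * (1 - r / (1 + R))

open Topology

section StarCorr

variable {ι : Type*} {l : Filter ι} {r R : ι → ℝ}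

theorem leafRatio_mem_Icc {w q : ℝ} (hw : 0 ≤ w) (hq : 0 < q) : leafRatio w q ∈ Set.Icc 0 1 :=
  ⟨div_nonneg hw (by linarith), div_le_one_of_le₀ (by linarith) (by linarith)⟩

theorem starCorr_bounds {r R : ℝ} (hr : r ∈ Set.Icc (0 : ℝ) 1) (hR : 0 ≤ R) :
    (1 - r) ^ 2 ≤ starCorr r R ∧ starCorr r R ≤ 1 - r := by
  obtain ⟨hr0, hr1⟩ := hr
  have hquot : r / (1 + R) ≤ r := div_le_self hr0 (by linarith)
  have hquot' : 0 ≤ r / (1 + R) := by positivity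
  constructor <;> unfold starCorr <;> nlinarith

theorem tendsto_starCorr_zero (hr : ∀ᶠ i in l, r i ∈ Set.Icc (0 : ℝ) 1)
    (hR : ∀ᶠ i in l, 0 ≤ R i) (h : Tendsto r l (𝓝 1)) :
    Tendsto (fun i => starCorr (r i) (R i)) l (𝓝 0) := by
  have hlin : Tendsto (fun i => 1 - r i) l (𝓝 0) := by simpa using h.const_sub 1
  refine tendsto_of_tendsto_of_tendsto_of_le_of_le' (by simpa using hlin.pow 2) hlin ?_ ?_
  all_goals filter_upwards [hr, hR] with i hri hRi
  exacts [(starCorr_bounds hri hRi).1, (starCorr_bounds hri hRi).2]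

theorem tendsto_starCorr_one (hr : ∀ᶠ i in l, r i ∈ Set.Icc (0 : ℝ) 1)
    (hR : ∀ᶠ i in l, 0 ≤ R i) (h : Tendsto r l (𝓝 0)) :
    Tendsto (fun i => starCorr (r i) (R i)) l (𝓝 1) := by
  have hlin : Tendsto (fun i => 1 - r i) l (𝓝 1) := by simpa using h.const_sub 1
  refine tendsto_of_tendsto_of_tendsto_of_le_of_le' (by simpa using hlin.pow 2) hlin ?_ ?_
  all_goals filter_upwards [hr, hR] with i hri hRi
  exacts [(starCorr_bounds hri hRi).1, (starCorr_bounds hri hRi).2]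

theorem tendsto_starCorr_of_tendsto_atTop {r₀ : ℝ} (hr : Tendsto r l (𝓝 r₀))
    (hR : Tendsto R l atTop) :
    Tendsto (fun i => starCorr (r i) (R i)) l (𝓝 (1 - r₀)) := by
  have hquot := hr.div_atTop (tendsto_atTop_add_const_left l 1 hR)
  simpa [starCorr] using (hr.const_sub 1).mul (hquot.const_sub 1)

theorem tendsto_starCorr {r₀ R₀ : ℝ} (hr : Tendsto r l (𝓝 r₀)) (hR : Tendsto R l (𝓝 R₀))
    (hR₀ : 1 + R₀ ≠ 0) :
    Tendsto (fun i => starCorr (r i) (R i)) l (𝓝 (starCorr r₀ R₀)) :=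
  (hr.const_sub 1).mul ((hr.div (hR.const_add 1) hR₀).const_sub 1)

theorem tendsto_mul_div_add_one_atTop {M t : ι → ℝ} (hM : Tendsto M l atTop)
    (hMt : Tendsto (fun i => M i * t i) l atTop) :
    Tendsto (fun i => M i * (t i / (t i + 1))) l atTop := by
  -- `M * (t / (t + 1)) = (M⁻¹ + (M * t)⁻¹)⁻¹`
  have hpos := (hM.eventually_gt_atTop 0).and (hMt.eventually_gt_atTop 0)
  have hsum : Tendsto (fun i => (M i)⁻¹ + (M i * t i)⁻¹) l (𝓝[>] 0) :=
    tendsto_nhdsWithin_iff.2 ⟨by simpa using hM.inv_tendsto_atTop.add hMt.inv_tendsto_atTop,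
      hpos.mono fun i ⟨hMi, hMti⟩ => Set.mem_Ioi.2 (by positivity)⟩
  refine hsum.inv_tendsto_nhdsGT_zero.congr' (hpos.mono fun i ⟨hMi, hMti⟩ => ?_)
  have hti : 0 < t i := pos_of_mul_pos_right hMti hMi.le
  simp only [Pi.inv_apply]
  field_simp

end StarCorr

section CommunityStar

open Real

def csgLeafRatioSum (n k : ℕ) (wv q : ℝ) : ℝ :=
  k * leafRatio 1 q + ((n : ℝ) - 1 - k) * leafRatio wv q

variable {k : ℕ} {α β : ℝ}

theorem sum_erase_zero_cstarW {n : ℕ} [NeZero n] (hkn : k < n) (wv q : ℝ) :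
    ∑ j ∈ univ.erase (0 : Fin n), cstarW n k wv 0 j / (cstarW n k wv j 0 + q)
      = csgLeafRatioSum n k wv q := by
  have hterm : ∀ j : Fin n, cstarW n k wv 0 j / (cstarW n k wv j 0 + q)
      = leafRatio (if (j : ℕ) ≤ k then 1 else wv) q := fun j => by
    simp only [cstarW, Fin.val_zero, zero_max, _root_.max_zero, leafRatio]
  rw [sum_congr rfl fun j _ => hterm j, sum_erase_eq_sub (mem_univ 0),
    Fin.sum_univ_eq_sum_range (fun m => leafRatio (if m ≤ k then 1 else wv) q)]
  obtain ⟨m, rfl⟩ : ∃ m, n = k + 1 + m := ⟨n - (k + 1), by omega⟩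
  have hlow : ∑ i ∈ range (k + 1), leafRatio (if i ≤ k then 1 else wv) q
      = (k + 1) * leafRatio 1 q := by
    rw [sum_congr rfl fun i hi => by rw [if_pos (Nat.lt_succ_iff.1 (mem_range.1 hi))]]
    simp
  have hhigh : ∑ i ∈ range m, leafRatio (if k + 1 + i ≤ k then 1 else wv) q
      = m * leafRatio wv q := by
    rw [sum_congr rfl fun i _ => by rw [if_neg (by omega)]]
    simp
  rw [sum_range_add, hlow, hhigh, csgLeafRatioSum]
  simp
  ring

theorem UCStar_eq_starCorr {n i : ℕ} (hkn : k < n) (hi : 0 < i) (hin : i < n) {wv q : ℝ}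
    (hwv : 0 ≤ wv) (hq : 0 < q) :
    UCStar n k wv q 0 i
      = starCorr (leafRatio (if i ≤ k then 1 else wv) q) (csgLeafRatioSum n k wv q) := by
  have : NeZero n := ⟨by omega⟩
  have hw : ∀ a b, 0 ≤ cstarW n k wv a b := fun a b => by
    unfold cstarW; split_ifs <;> linarith
  rw [UCStar, dif_pos ⟨by omega, hin⟩, show (⟨0, by omega⟩ : Fin n) = 0 from rfl,
    Ucorr_starAdj_zero _ hw hq (Fin.ne_of_val_ne hi.ne'), sum_erase_zero_cstarW hkn]
  have hcw : cstarW n k wv ⟨i, hin⟩ 0 = (if i ≤ k then 1 else wv)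
      ∧ cstarW n k wv 0 ⟨i, hin⟩ = (if i ≤ k then 1 else wv) := by
    simp [cstarW]
  rw [hcw.1, hcw.2, starCorr, leafRatio]
  have : 0 < (if i ≤ k then 1 else wv) + q := by split_ifs <;> linarith
  congr 1
  field_simp
  ring

theorem csgLeafRatioSum_nonneg {n : ℕ} (hkn : k < n) {wv q : ℝ} (hwv : 0 ≤ wv) (hq : 0 < q) :
    0 ≤ csgLeafRatioSum n k wv q := by
  have hM : (0 : ℝ) ≤ n - 1 - k := by
    have : (k : ℝ) + 1 ≤ n := by exact_mod_cast hkn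
    linarith
  have := (leafRatio_mem_Icc zero_le_one hq).1
  have := (leafRatio_mem_Icc hwv hq).1
  unfold csgLeafRatioSum
  positivity

theorem tendsto_natCast_rpow_atTop (hα : 0 < α) :
    Tendsto (fun n : ℕ => (n : ℝ) ^ α) atTop atTop :=
  (tendsto_rpow_atTop hα).comp tendsto_natCast_atTop_atTop

theorem tendsto_natCast_rpow_zero (hα : α < 0) :
    Tendsto (fun n : ℕ => (n : ℝ) ^ α) atTop (𝓝 0) := by
  simpa [Function.comp_def] using
    (tendsto_rpow_neg_atTop (neg_pos.2 hα)).comp tendsto_natCast_atTop_atTop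

theorem leafRatio_rpow {x : ℝ} (hx : 0 < x) (α β : ℝ) :
    leafRatio (x ^ β) (x ^ α) = (1 + x ^ (α - β))⁻¹ := by
  rw [leafRatio, rpow_sub hx]
  field_simp

theorem tendsto_leafRatio_rpow_of_lt (h : α < β) :
    Tendsto (fun n : ℕ => leafRatio ((n : ℝ) ^ β) ((n : ℝ) ^ α)) atTop (𝓝 1) := by
  have := ((tendsto_natCast_rpow_zero (sub_neg.2 h)).const_add 1).inv₀ (by norm_num)
  rw [add_zero, inv_one] at this
  refine this.congr' ?_
  filter_upwards [eventually_gt_atTop 0] with n hn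
  rw [leafRatio_rpow (by exact_mod_cast hn)]

theorem tendsto_leafRatio_rpow_of_gt (h : β < α) :
    Tendsto (fun n : ℕ => leafRatio ((n : ℝ) ^ β) ((n : ℝ) ^ α)) atTop (𝓝 0) := by
  refine (tendsto_atTop_add_const_left _ 1
    (tendsto_natCast_rpow_atTop (sub_pos.2 h))).inv_tendsto_atTop.congr' ?_
  filter_upwards [eventually_gt_atTop 0] with n hn
  rw [leafRatio_rpow (by exact_mod_cast hn)]
  rfl

theorem tendsto_natCast_sub_one_sub_atTop (k : ℕ) :
    Tendsto (fun n : ℕ => (n : ℝ) - 1 - k) atTop atTop := by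
  exact (tendsto_atTop_add_const_right atTop (-(1 + k : ℝ)) tendsto_natCast_atTop_atTop).congr
    fun n => by ring

theorem tendsto_natCast_sub_one_sub_mul_inv (k : ℕ) :
    Tendsto (fun n : ℕ => ((n : ℝ) - 1 - k) * (n : ℝ)⁻¹) atTop (𝓝 1) := by
  have := (tendsto_const_div_atTop_nhds_zero_nat ((1 : ℝ) + k)).const_sub 1
  rw [sub_zero] at this
  refine this.congr' ?_
  filter_upwards [eventually_gt_atTop 0] with n hn
  have : (n : ℝ) ≠ 0 := by positivity
  field_simp
  ring

theorem natCast_sub_one_sub_mul_rpow {n : ℕ} (hn : 0 < n) (k : ℕ) (β : ℝ) :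
    ((n : ℝ) - 1 - k) * (n : ℝ) ^ β = ((n : ℝ) - 1 - k) * (n : ℝ)⁻¹ * (n : ℝ) ^ (β + 1) := by
  have : (n : ℝ) ≠ 0 := by positivity
  rw [rpow_add_one this]
  field_simp

theorem tendsto_csgLeafRatioSum_atTop (hβ : -1 < β) :
    Tendsto (fun n : ℕ => csgLeafRatioSum n k ((n : ℝ) ^ β) 1) atTop atTop := by
  have hMt : Tendsto (fun n : ℕ => ((n : ℝ) - 1 - k) * (n : ℝ) ^ β) atTop atTop := by
    refine ((tendsto_natCast_sub_one_sub_mul_inv k).pos_mul_atTop one_pos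
      (tendsto_natCast_rpow_atTop (by linarith : 0 < β + 1))).congr' ?_
    filter_upwards [eventually_gt_atTop 0] with n hn
    rw [natCast_sub_one_sub_mul_rpow hn]
  exact tendsto_atTop_add_const_left _ _
    (tendsto_mul_div_add_one_atTop (tendsto_natCast_sub_one_sub_atTop k) hMt)

theorem tendsto_csgLeafRatioSum_neg_one :
    Tendsto (fun n : ℕ => csgLeafRatioSum n k ((n : ℝ) ^ (-1 : ℝ)) 1) atTop
      (𝓝 (k * leafRatio 1 1 + 1)) := by
  have hinv : Tendsto (fun n : ℕ => (n : ℝ)⁻¹) atTop (𝓝 0) :=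
    tendsto_inv_atTop_zero.comp tendsto_natCast_atTop_atTop
  have h := (tendsto_natCast_sub_one_sub_mul_inv k).div (hinv.add_const 1) (by norm_num)
  rw [zero_add, div_one] at h
  refine (h.const_add _).congr' (Eventually.of_forall fun n => ?_)
  simp only [Pi.div_apply, csgLeafRatioSum, rpow_neg_one, leafRatio, mul_div_assoc]

theorem tendsto_csgLeafRatioSum_of_lt_neg_one (hβ : β < -1) :
    Tendsto (fun n : ℕ => csgLeafRatioSum n k ((n : ℝ) ^ β) 1) atTop
      (𝓝 (k * leafRatio 1 1)) := by
  have hMt : Tendsto (fun n : ℕ => ((n : ℝ) - 1 - k) * (n : ℝ) ^ β) atTop (𝓝 0) := by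
    have := (tendsto_natCast_sub_one_sub_mul_inv k).mul
      (tendsto_natCast_rpow_zero (by linarith : β + 1 < 0))
    rw [one_mul] at this
    refine this.congr' ?_
    filter_upwards [eventually_gt_atTop 0] with n hn
    rw [natCast_sub_one_sub_mul_rpow hn]
  have h := (hMt.div ((tendsto_natCast_rpow_zero (by linarith)).add_const 1)
    (by norm_num)).const_add (k * leafRatio 1 1)
  rw [zero_div, add_zero] at h
  refine h.congr' (Eventually.of_forall fun n => ?_)
  simp only [Pi.div_apply, csgLeafRatioSum, leafRatio, mul_div_assoc]

theorem tendsto_csgLeafRatioSum_self_atTop :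
    Tendsto (fun n : ℕ => csgLeafRatioSum n k ((n : ℝ) ^ α) ((n : ℝ) ^ α)) atTop atTop := by
  have hhalf : Tendsto (fun n : ℕ => ((n : ℝ) - 1 - k) * leafRatio ((n : ℝ) ^ α) ((n : ℝ) ^ α))
      atTop atTop := by
    refine ((tendsto_natCast_sub_one_sub_atTop k).atTop_mul_const one_half_pos).congr' ?_
    filter_upwards [eventually_gt_atTop 0] with n hn
    have : 0 < (n : ℝ) ^ α := by positivity
    rw [leafRatio]
    field_simp
    ring
  refine tendsto_atTop_add_left_of_le _ 0 (fun n => ?_) hhalf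
  have := rpow_nonneg (Nat.cast_nonneg n : (0 : ℝ) ≤ n) α
  unfold leafRatio
  positivity

theorem tendsto_starCorr_half_of_neg_one_lt (hβ : -1 < β) :
    Tendsto (fun n : ℕ => starCorr (leafRatio 1 1) (csgLeafRatioSum n k ((n : ℝ) ^ β) 1))
      atTop (𝓝 (1 / 2)) := by
  convert tendsto_starCorr_of_tendsto_atTop tendsto_const_nhds
    (tendsto_csgLeafRatioSum_atTop hβ) using 2
  norm_num [leafRatio]

theorem tendsto_starCorr_half_neg_one :
    Tendsto (fun n : ℕ => starCorr (leafRatio 1 1) (csgLeafRatioSum n k ((n : ℝ) ^ (-1 : ℝ)) 1))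
      atTop (𝓝 ((k + 3) / (2 * k + 8))) := by
  convert tendsto_starCorr tendsto_const_nhds tendsto_csgLeafRatioSum_neg_one
    (by norm_num [leafRatio]; positivity) using 2
  norm_num [starCorr, leafRatio]
  field_simp
  ring

theorem tendsto_starCorr_half_of_lt_neg_one (hβ : β < -1) :
    Tendsto (fun n : ℕ => starCorr (leafRatio 1 1) (csgLeafRatioSum n k ((n : ℝ) ^ β) 1))
      atTop (𝓝 ((k + 1) / (2 * k + 4))) := by
  convert tendsto_starCorr tendsto_const_nhds (tendsto_csgLeafRatioSum_of_lt_neg_one hβ)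
    (by norm_num [leafRatio]; positivity) using 2
  norm_num [starCorr, leafRatio]
  field_simp
  ring

theorem tendsto_starCorr_rpow_self :
    Tendsto (fun n : ℕ => starCorr (leafRatio ((n : ℝ) ^ α) ((n : ℝ) ^ α))
      (csgLeafRatioSum n k ((n : ℝ) ^ α) ((n : ℝ) ^ α))) atTop (𝓝 (1 / 2)) := by
  have hhalf : Tendsto (fun n : ℕ => leafRatio ((n : ℝ) ^ α) ((n : ℝ) ^ α)) atTop (𝓝 (1 / 2)) := by
    refine tendsto_const_nhds.congr' ?_
    filter_upwards [eventually_gt_atTop 0] with n hn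
    have : 0 < (n : ℝ) ^ α := by positivity
    rw [leafRatio]
    field_simp
    ring
  convert tendsto_starCorr_of_tendsto_atTop hhalf tendsto_csgLeafRatioSum_self_atTop using 2
  norm_num

theorem eventually_gt_and_rpow_pos (k : ℕ) (α β : ℝ) :
    ∀ᶠ n : ℕ in atTop, k < n ∧ 0 < (n : ℝ) ^ β ∧ 0 < (n : ℝ) ^ α :=
  (eventually_gt_atTop k).mono fun n hn =>
    have hn0 : (0 : ℝ) < n := by exact_mod_cast (Nat.zero_le k).trans_lt hn
    ⟨hn, rpow_pos_of_pos hn0 β, rpow_pos_of_pos hn0 α⟩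

theorem eventually_leafRatio_rpow_mem_Icc (α γ : ℝ) :
    ∀ᶠ n : ℕ in atTop, leafRatio ((n : ℝ) ^ γ) ((n : ℝ) ^ α) ∈ Set.Icc 0 1 :=
  (eventually_gt_and_rpow_pos 0 α γ).mono fun _ ⟨_, hw, hq⟩ => leafRatio_mem_Icc hw.le hq

theorem eventually_csgLeafRatioSum_nonneg (k : ℕ) (α β : ℝ) :
    ∀ᶠ n : ℕ in atTop, 0 ≤ csgLeafRatioSum n k ((n : ℝ) ^ β) ((n : ℝ) ^ α) :=
  (eventually_gt_and_rpow_pos k α β).mono fun _ ⟨hkn, hw, hq⟩ =>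
    csgLeafRatioSum_nonneg hkn hw.le hq

theorem tendsto_starCorr_rpow_of_lt {γ : ℝ} (h : α < γ) :
    Tendsto (fun n : ℕ => starCorr (leafRatio ((n : ℝ) ^ γ) ((n : ℝ) ^ α))
      (csgLeafRatioSum n k ((n : ℝ) ^ β) ((n : ℝ) ^ α))) atTop (𝓝 0) :=
  tendsto_starCorr_zero (eventually_leafRatio_rpow_mem_Icc α γ)
    (eventually_csgLeafRatioSum_nonneg k α β) (tendsto_leafRatio_rpow_of_lt h)

theorem tendsto_starCorr_rpow_of_gt {γ : ℝ} (h : γ < α) :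
    Tendsto (fun n : ℕ => starCorr (leafRatio ((n : ℝ) ^ γ) ((n : ℝ) ^ α))
      (csgLeafRatioSum n k ((n : ℝ) ^ β) ((n : ℝ) ^ α))) atTop (𝓝 1) :=
  tendsto_starCorr_one (eventually_leafRatio_rpow_mem_Icc α γ)
    (eventually_csgLeafRatioSum_nonneg k α β) (tendsto_leafRatio_rpow_of_gt h)

theorem UCStar_light_eventuallyEq {x : ℕ → ℕ} (hx : ∀ᶠ n in atTop, 1 ≤ x n ∧ x n ≤ k)
    (α β : ℝ) :
    (fun n : ℕ => UCStar n k ((n : ℝ) ^ β) ((n : ℝ) ^ α) 0 (x n)) =ᶠ[atTop] fun n =>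
      starCorr (leafRatio 1 ((n : ℝ) ^ α)) (csgLeafRatioSum n k ((n : ℝ) ^ β) ((n : ℝ) ^ α)) := by
  filter_upwards [hx, eventually_gt_and_rpow_pos k α β] with n ⟨hx1, hxk⟩ ⟨hkn, hw, hq⟩
  rw [UCStar_eq_starCorr hkn (by omega) (by omega) hw.le hq, if_pos hxk]

theorem UCStar_heavy_eventuallyEq {y : ℕ → ℕ} (hy : ∀ᶠ n in atTop, k + 1 ≤ y n ∧ y n ≤ n - 1)
    (α β : ℝ) :
    (fun n : ℕ => UCStar n k ((n : ℝ) ^ β) ((n : ℝ) ^ α) 0 (y n)) =ᶠ[atTop] fun n =>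
      starCorr (leafRatio ((n : ℝ) ^ β) ((n : ℝ) ^ α))
        (csgLeafRatioSum n k ((n : ℝ) ^ β) ((n : ℝ) ^ α)) := by
  filter_upwards [hy, eventually_gt_and_rpow_pos k α β] with n ⟨hy1, hyn⟩ ⟨hkn, hw, hq⟩
  rw [UCStar_eq_starCorr hkn (by omega) (by omega) hw.le hq, if_neg (by omega)]

end CommunityStar

open Filter Real in
theorem community_star_asymptotics_general (k : ℕ) (α β : ℝ)
    (x y : ℕ → ℕ)
    (hx : ∀ᶠ n in atTop, 1 ≤ x n ∧ x n ≤ k)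
    (hy : ∀ᶠ n in atTop, k + 1 ≤ y n ∧ y n ≤ n - 1) :
    ((α < 0 → Tendsto (fun n : ℕ => UCStar n k ((n : ℝ) ^ β) ((n : ℝ) ^ α) 0 (x n))
        atTop (nhds 0)) ∧
      (α = 0 →
        ((β > -1 → Tendsto (fun n : ℕ => UCStar n k ((n : ℝ) ^ β) ((n : ℝ) ^ α) 0 (x n))
            atTop (nhds (1 / 2))) ∧
          (β = -1 → Tendsto (fun n : ℕ => UCStar n k ((n : ℝ) ^ β) ((n : ℝ) ^ α) 0 (x n))
            atTop (nhds (((k : ℝ) + 3) / (2 * (k : ℝ) + 8)))) ∧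
          (β < -1 → Tendsto (fun n : ℕ => UCStar n k ((n : ℝ) ^ β) ((n : ℝ) ^ α) 0 (x n))
            atTop (nhds (((k : ℝ) + 1) / (2 * (k : ℝ) + 4)))))) ∧
      (α > 0 → Tendsto (fun n : ℕ => UCStar n k ((n : ℝ) ^ β) ((n : ℝ) ^ α) 0 (x n))
        atTop (nhds 1))) ∧
    ((α < β → Tendsto (fun n : ℕ => UCStar n k ((n : ℝ) ^ β) ((n : ℝ) ^ α) 0 (y n))
        atTop (nhds 0)) ∧
      (α = β → Tendsto (fun n : ℕ => UCStar n k ((n : ℝ) ^ β) ((n : ℝ) ^ α) 0 (y n))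
        atTop (nhds (1 / 2))) ∧
      (α > β → Tendsto (fun n : ℕ => UCStar n k ((n : ℝ) ^ β) ((n : ℝ) ^ α) 0 (y n))
        atTop (nhds 1))) := by
  refine ⟨⟨fun hα => ?_, fun hα => ?_, fun hα => ?_⟩, fun h => ?_, fun h => ?_, fun h => ?_⟩
  · exact Tendsto.congr' (UCStar_light_eventuallyEq hx α β).symm
      (by simpa using tendsto_starCorr_rpow_of_lt (β := β) (γ := 0) hα)
  · subst hα
    have hx0 := UCStar_light_eventuallyEq hx 0
    simp only [rpow_zero] at hx0 ⊢
    refine ⟨fun hβ => (tendsto_starCorr_half_of_neg_one_lt hβ).congr' (hx0 β).symm,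
      fun hβ => ?_, fun hβ => (tendsto_starCorr_half_of_lt_neg_one hβ).congr' (hx0 β).symm⟩
    subst hβ
    exact tendsto_starCorr_half_neg_one.congr' (hx0 _).symm
  · exact Tendsto.congr' (UCStar_light_eventuallyEq hx α β).symm
      (by simpa using tendsto_starCorr_rpow_of_gt (β := β) (γ := 0) hα)
  · exact (tendsto_starCorr_rpow_of_lt h).congr' (UCStar_heavy_eventuallyEq hy α β).symm
  · subst h
    exact tendsto_starCorr_rpow_self.congr' (UCStar_heavy_eventuallyEq hy α α).symm
  · exact (tendsto_starCorr_rpow_of_gt h).congr' (UCStar_heavy_eventuallyEq hy α β).symm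

open Filter Real in
/-- **Asymptotic detection in a star graph with two communities.** In `CSG_{n,k}` with
`q_n = n^α`, `w_n = n^β`, `k` constant, centre `c`, a leaf `x_n` incident to a weight-`1`
edge and a leaf `y_n` incident to a weight-`w` edge, the limits of `U_{q_n}(c,x_n)` and
`U_{q_n}(c,y_n)` are as in the displayed case distinctions. -/
theorem community_star_asymptotics (k : ℕ) (hk : 1 ≤ k) (α β : ℝ)
    (x y : ℕ → ℕ)
    (hx : ∀ᶠ n in atTop, 1 ≤ x n ∧ x n ≤ k)
    (hy : ∀ᶠ n in atTop, k + 1 ≤ y n ∧ y n ≤ n - 1) :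
    ((α < 0 → Tendsto (fun n : ℕ => UCStar n k ((n : ℝ) ^ β) ((n : ℝ) ^ α) 0 (x n))
        atTop (nhds 0)) ∧
      (α = 0 →
        ((β > -1 → Tendsto (fun n : ℕ => UCStar n k ((n : ℝ) ^ β) ((n : ℝ) ^ α) 0 (x n))
            atTop (nhds (1 / 2))) ∧
          (β = -1 → Tendsto (fun n : ℕ => UCStar n k ((n : ℝ) ^ β) ((n : ℝ) ^ α) 0 (x n))
            atTop (nhds (((k : ℝ) + 3) / (2 * (k : ℝ) + 8)))) ∧
          (β < -1 → Tendsto (fun n : ℕ => UCStar n k ((n : ℝ) ^ β) ((n : ℝ) ^ α) 0 (x n))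
            atTop (nhds (((k : ℝ) + 1) / (2 * (k : ℝ) + 4)))))) ∧
      (α > 0 → Tendsto (fun n : ℕ => UCStar n k ((n : ℝ) ^ β) ((n : ℝ) ^ α) 0 (x n))
        atTop (nhds 1))) ∧
    ((α < β → Tendsto (fun n : ℕ => UCStar n k ((n : ℝ) ^ β) ((n : ℝ) ^ α) 0 (y n))
        atTop (nhds 0)) ∧
      (α = β → Tendsto (fun n : ℕ => UCStar n k ((n : ℝ) ^ β) ((n : ℝ) ^ α) 0 (y n))
        atTop (nhds (1 / 2))) ∧
      (α > β → Tendsto (fun n : ℕ => UCStar n k ((n : ℝ) ^ β) ((n : ℝ) ^ α) 0 (y n))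
        atTop (nhds 1))) :=
  community_star_asymptotics_general k α β x y hx hy

end
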